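/- A set of atoms M is an answer set of a basic positive program P (i.e., M is a model of P and M = T_P^∞(∅,M)) if and only if M is a weakly well-supported model of P. -/
import Mathlib


universe u

/-- An abstract constraint atom (c-atom): a domain and a set of solutions,
each solution being a subset of the domain. -/
structure CAtom (α : Type u) where
  dom : Set α
  sol : Set (Set α)
  sol_sub : ∀ X ∈ sol, X ⊆ dom

variable {α : Type u}

/-- `S ⊨ A` : satisfaction of a c-atom. -/
def CAtom.satBy (A : CAtom α) (S : Set α) : Prop := S ∩ A.dom ∈ A.sol

/-- `S ⊨_M A` : conditional satisfaction of a c-atom. -/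
def CAtom.condSatBy (A : CAtom α) (S M : Set α) : Prop :=
  A.satBy S ∧ ∀ I ⊆ A.dom, S ∩ A.dom ⊆ I → I ⊆ M ∩ A.dom → I ∈ A.sol

/-- A c-atom is monotone if solutions are closed under supersets (within the domain). -/
def CAtom.IsMonotone (A : CAtom α) : Prop :=
  ∀ X Y : Set α, X ⊆ Y → Y ⊆ A.dom → X ∈ A.sol → Y ∈ A.sol

/-- The complement c-atom `Ā = (A_d, 2^{A_d} \ A_c)`. -/
def CAtom.compl (A : CAtom α) : CAtom α :=
  ⟨A.dom, {X | X ⊆ A.dom ∧ X ∉ A.sol}, fun _ hX => hX.1⟩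

/-- The elementary c-atom `({a}, {{a}})`. -/
def elemAtom (a : α) : CAtom α :=
  ⟨{a}, {{a}}, by intro X hX; rw [Set.mem_singleton_iff] at hX; exact hX ▸ subset_rfl⟩

/-- A basic rule: head is an elementary c-atom `({a},{{a}})` (encoded as `some a`)
or the constraint head `⊥` (encoded as `none`); the body consists of positive
c-atoms `pos` and negation-as-failure c-atoms `neg`. -/
structure Rule (α : Type u) where
  head : Option α
  pos : Set (CAtom α)
  neg : Set (CAtom α)

/-- `M ⊨ body(r)`. -/
def Rule.bodySat (r : Rule α) (M : Set α) : Prop :=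
  (∀ A ∈ r.pos, A.satBy M) ∧ (∀ A ∈ r.neg, ¬ A.satBy M)

/-- Satisfaction of a rule head: the elementary head `({a},{{a}})` is satisfied iff
`a ∈ M`; the constraint head `⊥` is never satisfied. -/
def headSat (h : Option α) (M : Set α) : Prop := ∃ a, h = some a ∧ a ∈ M

/-- `M` is a model of `P`. -/
def isModel (P : Set (Rule α)) (M : Set α) : Prop :=
  ∀ r ∈ P, r.bodySat M → headSat r.head M

/-- A program is positive if no rule has naf-atoms. -/
def isPositive (P : Set (Rule α)) : Prop := ∀ r ∈ P, r.neg = ∅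

/-- The immediate consequence operator
`T_P(S,M) = { a | ∃ r ∈ P, head(r) = ({a},{{a}}), S ⊨_M pos(r) }`. -/
def TP (P : Set (Rule α)) (S M : Set α) : Set α :=
  { a | ∃ r ∈ P, r.head = some a ∧ ∀ A ∈ r.pos, A.condSatBy S M }

/-- The iteration `T_P^i(∅, M)`. -/
def TPiter (P : Set (Rule α)) (M : Set α) : ℕ → Set α
  | 0 => ∅
  | n + 1 => TP P (TPiter P M n) M

/-- The limit `T_P^∞(∅, M)`. -/
def TPinf (P : Set (Rule α)) (M : Set α) : Set α := ⋃ i, TPiter P M i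

/-- `M` is an answer set of a (positive) basic program `P`:
`M` is a model of `P` and `M = T_P^∞(∅,M)`. -/
def answerSetPos (P : Set (Rule α)) (M : Set α) : Prop :=
  isModel P M ∧ M = TPinf P M

/-- The reduct `P^M`: delete rules with `not A` in the body such that `M ⊨ A`,
and delete the naf-atoms from the remaining rules. -/
def reduct (P : Set (Rule α)) (M : Set α) : Set (Rule α) :=
  { r' | ∃ r ∈ P, (∀ A ∈ r.neg, ¬ A.satBy M) ∧ r' = ⟨r.head, r.pos, ∅⟩ }

/-- The complement program `𝒞(P)`: replace each `not A` by the complement c-atom `Ā`. -/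
def complProg (P : Set (Rule α)) : Set (Rule α) :=
  { r' | ∃ r ∈ P, r' = ⟨r.head, r.pos ∪ CAtom.compl '' r.neg, ∅⟩ }

/-- `M` is an answer set by reduct of `P` iff `M` is an answer set of `P^M`. -/
def answerSetByReduct (P : Set (Rule α)) (M : Set α) : Prop :=
  answerSetPos (reduct P M) M

/-- `M` is an answer set by complement of `P` iff `M` is an answer set of `𝒞(P)`. -/
def answerSetByCompl (P : Set (Rule α)) (M : Set α) : Prop :=
  answerSetPos (complProg P) M

/-- `P` is naf-monotone: every c-atom occurring in a naf-atom of `P` is monotone. -/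
def nafMonotone (P : Set (Rule α)) : Prop := ∀ r ∈ P, ∀ A ∈ r.neg, A.IsMonotone

/-- `M` is a weakly well-supported model of `P`: `M` is a model and there is a level
mapping `ℓ` (into the positive integers) such that each `b ∈ M` has a rule `r` with
head `({b},{{b}})`, `M ⊨ body(r)`, and for each `A ∈ pos(r)`, `L(A,M)` is defined and
`ℓ(b) > L(A,M)`, i.e. there is a solution `X ∈ A_c`, `X ⊆ M`, `X ⊨_M A` whose
members all have level below `ℓ(b)`. -/
def weaklyWS (P : Set (Rule α)) (M : Set α) : Prop :=
  isModel P M ∧ ∃ ℓ : α → ℕ, (∀ a ∈ M, 0 < ℓ a) ∧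
    ∀ b ∈ M, ∃ r ∈ P, r.head = some b ∧ r.bodySat M ∧
      ∀ A ∈ r.pos, ∃ X ∈ A.sol, X ⊆ M ∧ A.condSatBy X M ∧ ∀ x ∈ X, ℓ x < ℓ b

/-- `M` is a strongly well-supported model of `P`: as weakly well-supported, with
the level condition additionally imposed on the complements of the naf-atoms. -/
def stronglyWS (P : Set (Rule α)) (M : Set α) : Prop :=
  isModel P M ∧ ∃ ℓ : α → ℕ, (∀ a ∈ M, 0 < ℓ a) ∧
    ∀ b ∈ M, ∃ r ∈ P, r.head = some b ∧ r.bodySat M ∧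
      (∀ A ∈ r.pos, ∃ X ∈ A.sol, X ⊆ M ∧ A.condSatBy X M ∧ ∀ x ∈ X, ℓ x < ℓ b) ∧
      (∀ A ∈ r.neg, ∃ X ∈ A.compl.sol, X ⊆ M ∧ A.compl.condSatBy X M ∧
        ∀ x ∈ X, ℓ x < ℓ b)

/-- A normal logic program rule `a ← a₁,…,aₙ, not b₁,…,not bₘ`. -/
structure NRule (α : Type u) where
  head : α
  pos : Set α
  neg : Set α

/-- The Gelfond-Lifschitz reduct `GL(P,M)`. -/
def GLreduct (P : Set (NRule α)) (M : Set α) : Set (NRule α) :=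
  { n | ∃ r ∈ P, r.neg ∩ M = ∅ ∧ n = ⟨r.head, r.pos, ∅⟩ }

/-- The least model of a definite normal program. -/
def leastModel (Q : Set (NRule α)) : Set α :=
  ⋂₀ { S | ∀ r ∈ Q, r.pos ⊆ S → r.head ∈ S }

/-- `M` is a Gelfond-Lifschitz stable model of the normal program `P`. -/
def glStable (P : Set (NRule α)) (M : Set α) : Prop := M = leastModel (GLreduct P M)

/-- The translation `catom(P)`: replace each atom occurrence by its elementary c-atom. -/
def catomProg (P : Set (NRule α)) : Set (Rule α) :=
  { r' | ∃ r ∈ P, r' = ⟨some r.head, elemAtom '' r.pos, elemAtom '' r.neg⟩ }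

/-- A general (positive) rule: a c-atom head and a body of c-atoms. -/
structure GRule (α : Type u) where
  head : CAtom α
  pos : Set (CAtom α)

/-- `M` is a model of a general positive program. -/
def isGModel (P : Set (GRule α)) (M : Set α) : Prop :=
  ∀ r ∈ P, (∀ A ∈ r.pos, A.satBy M) → r.head.satBy M

/-- The instance `inst(P,M)` of a general program w.r.t. `M`. -/
def inst (P : Set (GRule α)) (M : Set α) : Set (Rule α) :=
  { r' | ∃ r ∈ P, M ∩ r.head.dom ∈ r.head.sol ∧
      ∃ b ∈ M ∩ r.head.dom, r' = ⟨some b, r.pos, ∅⟩ }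

/-- The set `P(S)` of rules applicable in `S`. -/
def appl (P : Set (GRule α)) (S : Set α) : Set (GRule α) :=
  { r ∈ P | ∀ A ∈ r.pos, A.satBy S }

/-- The nondeterministic one-step provability operator `T^{nd}_P`. -/
def Tnd (P : Set (GRule α)) (S : Set α) : Set (Set α) :=
  { S' | S' ⊆ (⋃ r ∈ appl P S, r.head.dom) ∧ ∀ r ∈ appl P S, r.head.satBy S' }

/-- `M` is a stable (derivable) model of a general positive program in the sense of
Marek and Truszczyński: `M` is the result of a `P`-computation. -/
def mtStable (P : Set (GRule α)) (M : Set α) : Prop :=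
  ∃ X : ℕ → Set α, X 0 = ∅ ∧ (∀ n, X n ⊆ X (n + 1)) ∧
    (∀ n, X (n + 1) ∈ Tnd P (X n)) ∧ M = ⋃ n, X n

/-- The FLP-reduct: keep exactly the rules whose body is satisfied by `M`. -/
def FLP (P : Set (Rule α)) (M : Set α) : Set (Rule α) := { r ∈ P | r.bodySat M }

/-- The unfolding of a basic positive program into a normal logic program:
each body c-atom `A` is replaced by the positive atoms of one of its solutions
together with the negations of the remaining atoms of its domain. -/
def unfolding (P : Set (Rule α)) : Set (NRule α) :=
  { n | ∃ r ∈ P, ∃ a, r.head = some a ∧ ∃ f : CAtom α → Set α,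
      (∀ A ∈ r.pos, f A ∈ A.sol) ∧
      n = ⟨a, ⋃ A ∈ r.pos, f A, ⋃ A ∈ r.pos, A.dom \ f A⟩ }

lemma condSat_mono {A : CAtom α} {S S' M : Set α} (hss : S ⊆ S') (h'M : S' ⊆ M)
    (h : A.condSatBy S M) : A.condSatBy S' M := by
  obtain ⟨_, h2⟩ := h
  refine ⟨h2 _ Set.inter_subset_right (Set.inter_subset_inter_left _ hss)
      (Set.inter_subset_inter_left _ h'M), ?_⟩
  exact fun I hI1 hI2 hI3 => h2 I hI1 ((Set.inter_subset_inter_left _ hss).trans hI2) hI3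

lemma condSat_satM {A : CAtom α} {S M : Set α} (hSM : S ⊆ M) (h : A.condSatBy S M) :
    A.satBy M :=
  h.2 _ Set.inter_subset_right (Set.inter_subset_inter_left _ hSM) subset_rfl

/-- `M` is an answer set of a basic positive program `P` iff `M` is a
weakly well-supported model of `P`. -/
theorem stmt13 (P : Set (Rule α)) (M : Set α) (hP : isPositive P) :
    answerSetPos P M ↔ weaklyWS P M := by
  classical
  constructor
  · rintro ⟨hMod, hM⟩
    have hsub : ∀ n, TPiter P M n ⊆ M := by
      intro n x hx; rw [hM]; exact Set.mem_iUnion.mpr ⟨n, hx⟩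
    have hmem : ∀ a ∈ M, ∃ i, a ∈ TPiter P M i := by
      intro a ha
      have : a ∈ TPinf P M := hM ▸ ha
      exact Set.mem_iUnion.mp this
    refine ⟨hMod, fun a => if h : ∃ i, a ∈ TPiter P M i then Nat.find h else 0, ?_, ?_⟩
    · intro a ha
      simp only [dif_pos (hmem a ha)]
      rcases Nat.eq_zero_or_pos (Nat.find (hmem a ha)) with h0 | h0
      · have := Nat.find_spec (hmem a ha)
        rw [h0] at this
        exact absurd this (by simp [TPiter])
      · exact h0
    · intro b hb
      have h : ∃ i, b ∈ TPiter P M i := hmem b hb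
      have h0 : 0 < Nat.find h := by
        rcases Nat.eq_zero_or_pos (Nat.find h) with h0 | h0
        · have := Nat.find_spec h
          rw [h0] at this
          exact absurd this (by simp [TPiter])
        · exact h0
      obtain ⟨m, hm⟩ := Nat.exists_eq_succ_of_ne_zero h0.ne'
      have hspec : b ∈ TPiter P M (m + 1) := by
        have := Nat.find_spec h
        rw [hm] at this
        exact this
      obtain ⟨r, hrP, hhead, hcond⟩ := hspec
      refine ⟨r, hrP, hhead, ⟨fun A hA => condSat_satM (hsub m) (hcond A hA),
        fun A hA => by rw [hP r hrP] at hA; exact hA.elim⟩, ?_⟩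
      intro A hAp
      have hc := hcond A hAp
      refine ⟨TPiter P M m ∩ A.dom, hc.1, Set.inter_subset_left.trans (hsub m), ?_, ?_⟩
      · have heq : TPiter P M m ∩ A.dom ∩ A.dom = TPiter P M m ∩ A.dom := by
          rw [Set.inter_assoc, Set.inter_self]
        exact ⟨by rw [CAtom.satBy, heq]; exact hc.1,
          fun I hI1 hI2 hI3 => hc.2 I hI1 (by rw [heq] at hI2; exact hI2) hI3⟩
      · intro x hx
        have hx' : ∃ i, x ∈ TPiter P M i := ⟨m, hx.1⟩
        simp only [dif_pos hx', dif_pos h, hm]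
        exact Nat.lt_succ_of_le (Nat.find_le hx.1)
  · rintro ⟨hMod, ℓ, hposℓ, hws⟩
    refine ⟨hMod, ?_⟩
    have hsub : ∀ n, TPiter P M n ⊆ M := by
      intro n
      induction n with
      | zero => simp [TPiter]
      | succ n ih =>
        rintro a ⟨r, hrP, hhead, hcond⟩
        have hbody : r.bodySat M := ⟨fun A hA => condSat_satM ih (hcond A hA),
          fun A hA => by rw [hP r hrP] at hA; exact hA.elim⟩
        obtain ⟨a', ha', haM⟩ := hMod r hrP hbody
        rw [hhead] at ha'
        exact (Option.some.inj ha').symm ▸ haM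
    have hstep : ∀ n, TPiter P M n ⊆ TPiter P M (n + 1) := by
      intro n
      induction n with
      | zero => simp [TPiter]
      | succ n ih =>
        rintro a ⟨r, hrP, hhead, hcond⟩
        exact ⟨r, hrP, hhead, fun A hA => condSat_mono ih (hsub (n + 1)) (hcond A hA)⟩
    have hmono : ∀ i j, i ≤ j → TPiter P M i ⊆ TPiter P M j := by
      intro i j hij
      induction hij with
      | refl => exact subset_rfl
      | step _ ih => exact ih.trans (hstep _)
    have key : ∀ n, ∀ b ∈ M, ℓ b = n → b ∈ TPiter P M n := by
      intro n
      induction n using Nat.strong_induction_on with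
      | _ n ih =>
        intro b hb hn
        obtain ⟨r, hrP, hhead, hbody, hA⟩ := hws b hb
        have hn0 : 0 < n := hn ▸ hposℓ b hb
        obtain ⟨m, rfl⟩ := Nat.exists_eq_succ_of_ne_zero hn0.ne'
        refine ⟨r, hrP, hhead, fun A hAp => ?_⟩
        obtain ⟨X, hXsol, hXM, hXc, hXl⟩ := hA A hAp
        have hXsub : X ⊆ TPiter P M m := by
          intro x hx
          have hlt : ℓ x < m + 1 := by have := hXl x hx; rw [hn] at this; exact this
          exact hmono _ _ (Nat.lt_succ_iff.mp hlt) (ih (ℓ x) hlt x (hXM hx) rfl)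
        have h1 : X ∩ A.dom ⊆ TPiter P M m ∩ A.dom := Set.inter_subset_inter_left _ hXsub
        refine ⟨?_, ?_⟩
        · exact hXc.2 _ Set.inter_subset_right h1 (Set.inter_subset_inter_left _ (hsub m))
        · intro I hI1 hI2 hI3
          exact hXc.2 I hI1 (h1.trans hI2) hI3
    apply Set.Subset.antisymm
    · intro b hb
      exact Set.mem_iUnion.mpr ⟨ℓ b, key (ℓ b) b hb rfl⟩
    · exact Set.iUnion_subset hsub
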